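/- arXiv:0710.2488 — 7 statements merged into one kernel-verified Lean document; each statement's English description precedes it below -/
import Mathlib

section
/- Let X be a quasi-compact quasi-separated scheme. A subset E ⊆ X is pro-constructible if and only if there exists an affine scheme X' and a morphism f : X' → X with E = f(X'). -/
open AlgebraicGeometry Topology TopologicalSpace Set

universe u

def IsRetrocompact' {X : Type*} [TopologicalSpace X] (s : Set X) : Prop :=
  ∀ U : Set X, IsOpen U → IsCompact U → IsCompact (s ∩ U)

/-- The constructible (patch) topology: generated by retrocompact opens and their
complements.  Its closed sets are the pro-constructible sets. -/
def constructibleTop (X : Type*) [TopologicalSpace X] : TopologicalSpace X :=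
  TopologicalSpace.generateFrom
    {s | (IsOpen s ∧ IsRetrocompact' s) ∨ (∃ u : Set X, IsOpen u ∧ IsRetrocompact' u ∧ s = uᶜ)}

/-- A subset is pro-constructible iff it is closed in the constructible topology. -/
def IsProconstructible {X : Type*} [TopologicalSpace X] (E : Set X) : Prop :=
  IsClosed[constructibleTop X] E

/-!
The constructible topology of a quasi-compact, quasi-separated scheme is totally separated,
it is compact on affine schemes, and quasi-compact morphisms are continuous for it; so the
image of an affine scheme is constructibly compact, hence closed. Conversely, a surjection
`Spec R ⟶ X` reduces the problem to `X = Spec A`, where `E` is the image of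
`Spec (∏_{x ∈ E} κ(x))`: a prime of this product lying over `p ∉ E` is excluded by a basic
constructible neighbourhood `D(f) ∩ V(G)` of `p` missing `E`, because in a product of fields
each `g` has the support idempotent `g * g⁻¹`.
-/

open CategoryTheory

section ConstructibleTopology

variable {X Y : Type*} [TopologicalSpace X] [TopologicalSpace Y]

lemma isRetrocompact'_iff_isCompact [CompactSpace X] [QuasiSeparatedSpace X] {u : Set X}
    (hu : IsOpen u) : IsRetrocompact' u ↔ IsCompact u :=
  ⟨fun h ↦ by simpa using h univ isOpen_univ isCompact_univ,
    fun hc _ hU hUc ↦ QuasiSeparatedSpace.inter_isCompact _ _ hu hc hU hUc⟩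

lemma constructibleTop_eq_constructibleTopology [CompactSpace X] [QuasiSeparatedSpace X] :
    constructibleTop X = constructibleTopology X := by
  refine congrArg generateFrom (ext fun s ↦ ?_)
  simp only [constructibleTopologySubbasis, mem_ofPred_eq, mem_union]
  constructor
  · rintro (⟨ho, hr⟩ | ⟨u, hu, hr, rfl⟩)
    · exact .inl ⟨ho, (isRetrocompact'_iff_isCompact ho).1 hr⟩
    · exact .inr ⟨hu.isClosed_compl, by rwa [compl_compl, ← isRetrocompact'_iff_isCompact hu]⟩
  · rintro (⟨ho, hc⟩ | ⟨hcl, hc⟩)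
    · exact .inl ⟨ho, (isRetrocompact'_iff_isCompact ho).2 hc⟩
    · exact .inr ⟨sᶜ, hcl.isOpen_compl, (isRetrocompact'_iff_isCompact hcl.isOpen_compl).2 hc,
        (compl_compl s).symm⟩

lemma isProconstructible_iff_isClosed_constructibleTopology [CompactSpace X]
    [QuasiSeparatedSpace X] {E : Set X} :
    IsProconstructible E ↔ IsClosed[constructibleTopology X] E := by
  rw [IsProconstructible, constructibleTop_eq_constructibleTopology]

lemma isClopen_constructibleTopology {s : Set X} (ho : IsOpen s) (hc : IsCompact s) :
    @IsClopen X (constructibleTopology X) s :=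
  ⟨(@isOpen_compl_iff X s (constructibleTopology X)).mp <|
      IsCompact.isOpen_constructibleTopology_of_isClosed (by simpa) ho.isClosed_compl,
    hc.isOpen_constructibleTopology_of_isOpen ho⟩

lemma continuous_constructibleTopology {f : X → Y} (hf : Continuous f)
    (hqc : ∀ V, IsOpen V → IsCompact V → IsCompact (f ⁻¹' V)) :
    Continuous[constructibleTopology X, constructibleTopology Y] f := by
  refine continuous_generateFrom_iff.mpr ?_
  rintro s (⟨ho, hc⟩ | ⟨hcl, hc⟩)
  · exact (hqc s ho hc).isOpen_constructibleTopology_of_isOpen (ho.preimage hf)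
  · exact IsCompact.isOpen_constructibleTopology_of_isClosed
      (by simpa using hqc _ hcl.isOpen_compl hc) (hcl.preimage hf)

lemma totallySeparatedSpace_constructibleTopology [T0Space X] [PrespectralSpace X] :
    @TotallySeparatedSpace X (constructibleTopology X) := by
  refine @totallySeparatedSpace_iff_exists_isClopen X (constructibleTopology X) |>.mpr
    fun x y hxy ↦ ?_
  obtain ⟨U, hU, hxU | hyU⟩ := exists_isOpen_xor_mem hxy
  · obtain ⟨V, ⟨hVo, hVc⟩, hxV, hVU⟩ :=
      PrespectralSpace.isTopologicalBasis.exists_subset_of_mem_open hxU.1 hU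
    exact ⟨V, isClopen_constructibleTopology hVo hVc, hxV, fun hyV ↦ hxU.2 (hVU hyV)⟩
  · obtain ⟨V, ⟨hVo, hVc⟩, hyV, hVU⟩ :=
      PrespectralSpace.isTopologicalBasis.exists_subset_of_mem_open hyU.1 hU
    exact ⟨Vᶜ, @IsClopen.compl X (constructibleTopology X) _
      (isClopen_constructibleTopology hVo hVc), fun hxV ↦ hyU.2 (hVU hxV), not_not.mpr hyV⟩

lemma compactSpace_constructibleTopology [CompactSpace X] [QuasiSober X] [PrespectralSpace X]
    [QuasiSeparatedSpace X] : @CompactSpace X (constructibleTopology X) :=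
  @Function.Surjective.compactSpace _ _ _ (constructibleTopology X)
    _ (WithTopology.continuous_ofTopology _) _ (WithTopology.ofTopology_surjective _)

lemma isClosed_constructibleTopology_range [CompactSpace X] [QuasiSober X] [PrespectralSpace X]
    [QuasiSeparatedSpace X] [T0Space Y] [PrespectralSpace Y] {f : X → Y} (hf : Continuous f)
    (hqc : ∀ V, IsOpen V → IsCompact V → IsCompact (f ⁻¹' V)) :
    IsClosed[constructibleTopology Y] (range f) :=
  @IsCompact.isClosed Y (constructibleTopology Y)
    (@TotallySeparatedSpace.t2Space Y (constructibleTopology Y)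
      totallySeparatedSpace_constructibleTopology) _
    (@isCompact_range X Y (constructibleTopology X) (constructibleTopology Y)
      compactSpace_constructibleTopology f (continuous_constructibleTopology hf hqc))

end ConstructibleTopology

lemma Pi.exists_ne_zero_and_forall_eq_zero_of_isPrime {ι β : Type*} {K : ι → Type*}
    [∀ i, Field (K i)] (q : Ideal (Π i, K i)) [q.IsPrime] {r : Π i, K i} (hr : r ∉ q)
    {s : Finset β} {g : β → Π i, K i} (hg : ∀ b ∈ s, g b ∈ q) :
    ∃ i, r i ≠ 0 ∧ ∀ b ∈ s, g b i = 0 := by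
  by_contra! h
  -- `g b * (g b)⁻¹` is the idempotent supported where `g b` is nonzero
  have hzero : r * ∏ b ∈ s, (1 - g b * (g b)⁻¹) = 0 := by
    funext i
    simp only [Pi.mul_apply, Finset.prod_apply, Pi.sub_apply, Pi.one_apply, Pi.inv_apply,
      Pi.zero_apply]
    by_cases hri : r i = 0
    · rw [hri, zero_mul]
    · obtain ⟨b, hb, hbi⟩ := h i hri
      rw [Finset.prod_eq_zero hb (by rw [mul_inv_cancel₀ hbi, sub_self]), mul_zero]
  have hunit : ∀ b ∈ s, 1 - g b * (g b)⁻¹ ∉ q := fun b hb hmem ↦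
    Ideal.IsPrime.ne_top ‹_› <| (Ideal.eq_top_iff_one q).mpr <| by
      simpa using q.add_mem hmem (q.mul_mem_right (g b)⁻¹ (hg b hb))
  rcases Ideal.IsPrime.mem_or_mem ‹_› (hzero ▸ q.zero_mem) with hr' | hprod
  · exact hr hr'
  · obtain ⟨b, hb, hmem⟩ := Ideal.IsPrime.prod_mem_iff.mp hprod
    exact hunit b hb hmem

namespace PrimeSpectrum

lemma exists_basicOpen_inter_zeroLocus_subset {A : Type*} [CommRing A] {U : Set (PrimeSpectrum A)}
    (hU : IsOpen[constructibleTopology (PrimeSpectrum A)] U) {p : PrimeSpectrum A} (hp : p ∈ U) :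
    ∃ (f : A) (G : Finset A),
      p ∈ (basicOpen f : Set _) ∩ zeroLocus G ∧ (basicOpen f : Set _) ∩ zeroLocus G ⊆ U := by
  classical
  induction hU generalizing p with
  | basic s hs =>
    rcases hs with ⟨ho, hc⟩ | ⟨hcl, hc⟩
    · obtain ⟨G, rfl⟩ := isCompact_isOpen_iff.mp ⟨hc, ho⟩
      obtain ⟨f, hfG, hfp⟩ := not_subset.mp ((mem_compl_iff _ _).mp hp)
      exact ⟨f, ∅, ⟨hfp, by simp⟩, fun x hx hxG ↦ hx.1 (hxG hfG)⟩
    · obtain ⟨G, hG⟩ := isCompact_isOpen_iff.mp ⟨hc, hcl.isOpen_compl⟩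
      rw [compl_inj_iff] at hG
      subst hG
      exact ⟨1, G, ⟨by simp, hp⟩, inter_subset_right⟩
  | univ => exact ⟨1, ∅, by simp, subset_univ _⟩
  | inter s t _ _ ihs iht =>
    obtain ⟨f, G, hpfG, hfGs⟩ := ihs hp.1
    obtain ⟨f', G', hpfG', hfGt⟩ := iht hp.2
    refine ⟨f * f', G ∪ G', ?_, ?_⟩ <;>
      simp only [basicOpen_mul, Finset.coe_union, zeroLocus_union, Opens.coe_inf] at *
    · exact ⟨⟨hpfG.1, hpfG'.1⟩, hpfG.2, hpfG'.2⟩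
    · exact fun x ⟨⟨hx, hx'⟩, hxG, hxG'⟩ ↦ ⟨hfGs ⟨hx, hxG⟩, hfGt ⟨hx', hxG'⟩⟩
  | sUnion S _ ih =>
    obtain ⟨s, hs, hps⟩ := hp
    obtain ⟨f, G, hpfG, hfGs⟩ := ih s hs hps
    exact ⟨f, G, hpfG, hfGs.trans (subset_sUnion_of_mem hs)⟩

theorem exists_range_comap_eq {A : Type u} [CommRing A] {E : Set (PrimeSpectrum A)}
    (hE : IsClosed[constructibleTopology (PrimeSpectrum A)] E) :
    ∃ (R : Type u) (_ : CommRing R) (φ : A →+* R), range (comap φ) = E := by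
  let φ : A →+* Π x : E, x.1.asIdeal.ResidueField :=
    RingHom.pi fun x ↦ algebraMap A x.1.asIdeal.ResidueField
  have hφ (x : E) (a : A) : φ a x = 0 ↔ a ∈ x.1.asIdeal := Ideal.algebraMap_residueField_eq_zero
  refine ⟨_, inferInstance, φ, subset_antisymm ?_ fun x hx ↦ ?_⟩
  · rintro _ ⟨q, rfl⟩
    by_contra hq
    obtain ⟨f, G, ⟨hf, hG⟩, hfG⟩ := exists_basicOpen_inter_zeroLocus_subset hE.isOpen_compl hq
    obtain ⟨x, hfx, hGx⟩ := Pi.exists_ne_zero_and_forall_eq_zero_of_isPrime q.asIdeal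
      (r := φ f) hf (s := G) (g := φ) fun g hg ↦ hG hg
    exact hfG ⟨mt (hφ x f).mpr hfx, fun g hg ↦ (hφ x g).mp (hGx g hg)⟩ x.2
  · refine ⟨⟨RingHom.ker (Pi.evalRingHom (fun y : E ↦ y.1.asIdeal.ResidueField) ⟨x, hx⟩),
      RingHom.ker_isPrime _⟩, PrimeSpectrum.ext (Ideal.ext fun a ↦ ?_)⟩
    exact hφ ⟨x, hx⟩ a

end PrimeSpectrum

namespace AlgebraicGeometry

lemma Scheme.Hom.continuous_constructibleTopology {X Y : Scheme.{u}} (f : X ⟶ Y)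
    [QuasiCompact f] : Continuous[constructibleTopology X, constructibleTopology Y] f :=
  _root_.continuous_constructibleTopology f.continuous
    (QuasiCompact.isCompact_preimage (f := f))

lemma exists_range_spec_map_comp_eq_inter_range {X : Scheme.{u}} {R : CommRingCat.{u}}
    (g : Spec R ⟶ X) [QuasiCompact g] {E : Set X} (hE : IsClosed[constructibleTopology X] E) :
    ∃ (S : CommRingCat.{u}) (φ : R ⟶ S), range (Spec.map φ ≫ g) = E ∩ range g := by
  obtain ⟨S, _, φ, hφ⟩ := PrimeSpectrum.exists_range_comap_eq
    (@IsClosed.preimage _ _ (constructibleTopology _) (constructibleTopology _) _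
      g.continuous_constructibleTopology _ hE)
  refine ⟨.of S, CommRingCat.ofHom φ, ?_⟩
  rw [Scheme.Hom.comp_base, TopCat.coe_comp, range_comp, ← image_preimage_eq_inter_range, ← hφ]
  rfl

end AlgebraicGeometry

/-- On a quasi-compact quasi-separated scheme, a subset is pro-constructible iff it is
the image of a morphism from an affine scheme. -/
theorem stmt1 (X : Scheme.{u}) [CompactSpace X] [QuasiSeparatedSpace X] (E : Set X) :
    IsProconstructible E ↔
      ∃ (X' : Scheme.{u}) (_ : IsAffine X') (f : X' ⟶ X), E = Set.range f.base := by
  rw [isProconstructible_iff_isClosed_constructibleTopology]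
  constructor
  · intro hE
    obtain ⟨R, g, hg⟩ := compactSpace_iff_exists.mp ‹CompactSpace X›
    obtain ⟨S, φ, hφ⟩ := exists_range_spec_map_comp_eq_inter_range g hE
    exact ⟨Spec S, inferInstance, Spec.map φ ≫ g, by rw [hφ, hg.range_eq, inter_univ]⟩
  · rintro ⟨X', _, f, rfl⟩
    exact isClosed_constructibleTopology_range f.continuous
      (QuasiCompact.isCompact_preimage (f := f))
end

section
/- Let f : X → Y be a morphism of schemes. The following are equivalent: (i) every specialization pair y ≤ y' in Y (meaning y ∈ closure{y'}) lifts to a pair x ≤ x' in X with f(x) = y, f(x') = y'; (ii) for every point y ∈ Y, f(S(f⁻¹(y))) = S(y), where S denotes closure under specialization; (iii) for every subset Z ⊆ Y, f(S(f⁻¹(Z))) = S(Z). -/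
/-!
Only the underlying continuous map matters. Continuity gives `f(S(f⁻¹(Z))) ⊆ S(Z)` for free,
and the reverse inclusion for singletons is a restatement of the lifting property.
-/

open AlgebraicGeometry Topology Set

universe u

/-- The specialization closure `S(E)` of a subset: all specializations of points of `E`. -/
def specCl {X : Type*} [TopologicalSpace X] (E : Set X) : Set X := {y | ∃ e ∈ E, e ⤳ y}

section LiftsSpecializations

variable {X Y : Type*} [TopologicalSpace X] [TopologicalSpace Y]

/-- The paper's *S-subtrusive* maps. -/
def LiftsSpecializations (f : X → Y) : Prop :=
  ∀ y y' : Y, y' ⤳ y → ∃ x x' : X, x' ⤳ x ∧ f x = y ∧ f x' = y'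

lemma specCl_mono {E F : Set X} (h : E ⊆ F) : specCl E ⊆ specCl F :=
  fun _ ⟨e, he, hs⟩ => ⟨e, h he, hs⟩

lemma image_specCl_subset {f : X → Y} (hf : Continuous f) (E : Set X) :
    f '' specCl E ⊆ specCl (f '' E) := by
  rintro _ ⟨x, ⟨e, he, hs⟩, rfl⟩
  exact ⟨f e, mem_image_of_mem f he, hs.map hf⟩

lemma image_specCl_preimage_subset {f : X → Y} (hf : Continuous f) (Z : Set Y) :
    f '' specCl (f ⁻¹' Z) ⊆ specCl Z :=
  (image_specCl_subset hf _).trans (specCl_mono (image_preimage_subset f Z))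

lemma LiftsSpecializations.specCl_subset_image {f : X → Y} (hf : LiftsSpecializations f)
    (Z : Set Y) : specCl Z ⊆ f '' specCl (f ⁻¹' Z) := by
  rintro y ⟨y', hy', hs⟩
  obtain ⟨x, x', hx, rfl, rfl⟩ := hf y y' hs
  exact ⟨x, ⟨x', hy', hx⟩, rfl⟩

lemma LiftsSpecializations.image_specCl_preimage {f : X → Y} (hf : LiftsSpecializations f)
    (hc : Continuous f) (Z : Set Y) : f '' specCl (f ⁻¹' Z) = specCl Z :=
  (image_specCl_preimage_subset hc Z).antisymm (hf.specCl_subset_image Z)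

lemma liftsSpecializations_of_specCl_singleton_subset {f : X → Y}
    (h : ∀ y : Y, specCl {y} ⊆ f '' specCl (f ⁻¹' {y})) : LiftsSpecializations f := by
  intro y y' hs
  obtain ⟨x, ⟨x', hx', hx⟩, rfl⟩ := h y' ⟨y', rfl, hs⟩
  exact ⟨x, x', hx, rfl, hx'⟩

end LiftsSpecializations

/-- For a morphism of schemes `f : X ⟶ Y` the following are equivalent:
(i) every specialization pair in `Y` lifts to one in `X`;
(ii) `f(S(f⁻¹(y))) = S(y)` for every point `y`;
(iii) `f(S(f⁻¹(Z))) = S(Z)` for every subset `Z`. -/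
theorem stmt3 {X Y : Scheme.{u}} (f : X ⟶ Y) :
    List.TFAE [
      ∀ y y' : Y, y' ⤳ y → ∃ x x' : X, x' ⤳ x ∧ f.base x = y ∧ f.base x' = y',
      ∀ y : Y, f.base '' specCl (f.base ⁻¹' {y}) = specCl {y},
      ∀ Z : Set Y, f.base '' specCl (f.base ⁻¹' Z) = specCl Z] := by
  tfae_have 1 → 3 := fun h => LiftsSpecializations.image_specCl_preimage h f.base.hom.continuous
  tfae_have 3 → 2 := fun h y => h {y}
  tfae_have 2 → 1 := fun h => liftsSpecializations_of_specCl_singleton_subset fun y => (h y).ge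
  tfae_finish
end

section
/- Let V be a valuation ring and f : X → Spec(V) a morphism of schemes such that the pair m ≤ (0) lifts to a pair x ≤ x' in X. Then there exists a valuation ring W and a morphism Spec(W) → X such that the composition Spec(W) → X → Spec(V) is surjective. -/
/-! A valuation ring `A` of `κ(x')` dominating the image of `𝒪_{X,x}` gives `Spec A ⟶ X` sending
the closed point to `x` and the generic point to `x'`. Composed with `f`, it hits both the closed
and the generic point of `Spec V`, so the ring map `V → A` is local and injective. Then `A` is
torsion-free, hence flat, over the valuation ring `V`, and being local it is faithfully flat, so
`Spec A → Spec V` is surjective. -/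

open AlgebraicGeometry CategoryTheory Topology IsLocalRing

universe u

theorem PrimeSpectrum.comap_surjective_of_valuationRing
    {V W : Type*} [CommRing V] [IsDomain V] [ValuationRing V]
    [CommRing W] [IsDomain W] [IsLocalRing W] (φ : V →+* W)
    (hc : PrimeSpectrum.comap φ (closedPoint W) = closedPoint V)
    (hg : PrimeSpectrum.comap φ ⟨⊥, Ideal.isPrime_bot⟩ = ⟨⊥, Ideal.isPrime_bot⟩) :
    Function.Surjective (PrimeSpectrum.comap φ) := by
  algebraize [φ]
  have : IsLocalHom (algebraMap V W) := (isLocalHom_iff_comap_closedPoint φ).mpr hc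
  have : FaithfulSMul V W := (faithfulSMul_iff_algebraMap_injective V W).mpr <| by
    rw [RingHom.injective_iff_ker_eq_bot, RingHom.ker_eq_comap_bot]
    exact congrArg PrimeSpectrum.asIdeal hg
  have : Module.Flat V W := Module.Flat.flat_iff_torsion_eq_bot_of_isBezout.mpr <|
    Submodule.isTorsionFree_iff_torsion_eq_bot.mp inferInstance
  have : Module.FaithfullyFlat V W := .of_flat_of_isLocalHom
  exact PrimeSpectrum.comap_surjective_of_faithfullyFlat

theorem AlgebraicGeometry.Spec_hom_surjective_of_valuationRing
    {V W : Type u} [CommRing V] [IsDomain V] [ValuationRing V]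
    [CommRing W] [IsDomain W] [IsLocalRing W]
    (φ : Spec (CommRingCat.of W) ⟶ Spec (CommRingCat.of V))
    (hc : φ.base (closedPoint W) = closedPoint V)
    (hg : φ.base ⟨⊥, Ideal.isPrime_bot⟩ = ⟨⊥, Ideal.isPrime_bot⟩) :
    Function.Surjective φ.base := by
  rw [← Spec.map_preimage φ] at hc hg ⊢
  exact PrimeSpectrum.comap_surjective_of_valuationRing _ hc hg

theorem AlgebraicGeometry.Scheme.exists_Spec_valuationRing_of_specializes {X : Scheme.{u}}
    {x x' : X} (h : x' ⤳ x) :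
    ∃ (A : Type u) (_ : CommRing A) (_ : IsDomain A) (_ : ValuationRing A)
      (g : Spec (CommRingCat.of A) ⟶ X),
      g.base (closedPoint A) = x ∧ g.base ⟨⊥, Ideal.isPrime_bot⟩ = x' := by
  let ψ : X.presheaf.stalk x ⟶ X.residueField x' :=
    X.presheaf.stalkSpecializes h ≫ X.residue x'
  obtain ⟨A, hA, hA_local⟩ := exists_factor_valuationRing ψ.hom
  let ψA : X.presheaf.stalk x ⟶ CommRingCat.of A := CommRingCat.ofHom (ψ.hom.codRestrict _ hA)
  have : IsLocalHom ψA.hom := hA_local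
  have generic_eq : Spec.map ψA ⟨⊥, Ideal.isPrime_bot⟩ =
      Spec.map (X.presheaf.stalkSpecializes h) (closedPoint _ : Spec (X.presheaf.stalk x')) := by
    refine PrimeSpectrum.ext ?_
    change RingHom.ker ψA.hom = (maximalIdeal _).comap (X.presheaf.stalkSpecializes h).hom
    rw [← RingHom.ker_comp_of_injective ψA.hom A.subtype_injective, ← ker_residue,
      RingHom.comap_ker]
    rfl
  refine ⟨A, inferInstance, inferInstance, inferInstance, Spec.map ψA ≫ X.fromSpecStalk x, ?_, ?_⟩
  · show X.fromSpecStalk x (Spec.map ψA (closedPoint A)) = x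
    rw [Spec_closedPoint, fromSpecStalk_closedPoint]
  · show X.fromSpecStalk x (Spec.map ψA ⟨⊥, Ideal.isPrime_bot⟩) = x'
    rw [generic_eq]
    exact (Scheme.Hom.comp_apply _ _ _).symm.trans <| by
      rw [SpecMap_stalkSpecializes_fromSpecStalk, fromSpecStalk_closedPoint]

/-- Let `V` be a valuation ring and `f : X ⟶ Spec V` such that the pair `m ≤ (0)` lifts to
a specialization pair `x ≤ x'` in `X`.  Then there is a valuation ring `W` and a morphism
`Spec W ⟶ X` whose composition with `f` is surjective. -/
theorem stmt9 {V : Type u} [CommRing V] [IsDomain V] [ValuationRing V]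
    {X : Scheme.{u}} (f : X ⟶ Spec (CommRingCat.of V))
    (x x' : X) (hspec : x' ⤳ x)
    (hx : f.base x = IsLocalRing.closedPoint V)
    (hx' : f.base x' = (⟨⊥, Ideal.bot_prime⟩ : PrimeSpectrum V)) :
    ∃ (W : Type u) (_ : CommRing W) (_ : IsDomain W) (_ : ValuationRing W)
      (g : Spec (CommRingCat.of W) ⟶ X),
      Function.Surjective (g ≫ f).base := by
  obtain ⟨W, _, _, _, g, hg, hg'⟩ := Scheme.exists_Spec_valuationRing_of_specializes hspec
  exact ⟨W, inferInstance, inferInstance, inferInstance, g,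
    Spec_hom_surjective_of_valuationRing (g ≫ f)
      ((congrArg f.base hg).trans hx) ((congrArg f.base hg').trans hx')⟩
end

section
/- Let V be a discrete valuation ring and f : X → Spec(V) a morphism of schemes. Then f is submersive if and only if the closure of the generic fiber of f in X surjects onto Spec(V). -/
/-!
`Spec V` is a Sierpiński space: a generic point `η` which is open, and a closed point `s` which
is not open. Hence a continuous map to it is a quotient map iff `η` is hit and `f⁻¹{s}` is not
open, i.e. the generic fibre `f⁻¹{η}` is not closed. The generic fibre fails to be closed
exactly when its closure meets the special fibre.
-/

open AlgebraicGeometry CategoryTheory Topology Set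

universe u

section TwoPointSpace

variable {X Y : Type*} [TopologicalSpace X] {f : X → Y} {η s : Y}

theorem image_closure_preimage_singleton_eq_univ_iff (hY : ∀ y, y = η ∨ y = s) (hηs : η ≠ s) :
    f '' closure (f ⁻¹' {η}) = univ ↔ η ∈ range f ∧ ¬IsOpen (f ⁻¹' {s}) := by
  have hfibres : f ⁻¹' {s} = (f ⁻¹' {η})ᶜ := by
    ext x
    rcases hY (f x) with hx | hx <;> simp [hx, hηs, hηs.symm]
  have hη : η ∈ f '' closure (f ⁻¹' {η}) ↔ η ∈ range f :=
    ⟨fun ⟨x, _, hx⟩ ↦ ⟨x, hx⟩, fun ⟨x, hx⟩ ↦ ⟨x, subset_closure hx, hx⟩⟩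
  have hs : s ∈ f '' closure (f ⁻¹' {η}) ↔ ¬IsClosed (f ⁻¹' {η}) := by
    rw [← closure_subset_iff_isClosed, not_subset]
    refine exists_congr fun x ↦ and_congr_right fun _ ↦ ?_
    rcases hY (f x) with hx | hx <;> simp [hx, hηs, hηs.symm]
  rw [hfibres, isOpen_compl_iff, ← hη, ← hs, eq_univ_iff_forall]
  exact ⟨fun h ↦ ⟨h η, h s⟩, fun h y ↦ (hY y).elim (· ▸ h.1) (· ▸ h.2)⟩

theorem isQuotientMap_iff_of_forall_eq_or_eq [TopologicalSpace Y] (hf : Continuous f)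
    (hY : ∀ y, y = η ∨ y = s) (hη : IsOpen {η}) (hs : ¬IsOpen {s}) :
    IsQuotientMap f ↔ η ∈ range f ∧ ¬IsOpen (f ⁻¹' {s}) := by
  refine ⟨fun hq ↦ ⟨hq.surjective η, fun h ↦ hs (hq.isOpen_preimage.mp h)⟩, ?_⟩
  rintro ⟨hηf, hsf⟩
  have hsurj : Function.Surjective f := by
    intro y
    rcases hY y with rfl | rfl
    · exact hηf
    · by_contra hy
      exact hsf (preimage_singleton_eq_empty.mpr hy ▸ isOpen_empty)
  refine ⟨.of_isOpen_preimage_iff_isOpen fun U ↦ ⟨fun hU ↦ ?_, (·.preimage hf)⟩, hsurj⟩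
  by_cases hsU : s ∈ U
  · by_cases hηU : η ∈ U
    · have : U = univ := eq_univ_of_forall fun y ↦ (hY y).elim (· ▸ hηU) (· ▸ hsU)
      exact this ▸ isOpen_univ
    · have : U = {s} := eq_singleton_iff_unique_mem.mpr
        ⟨hsU, fun y hy ↦ (hY y).resolve_left (by rintro rfl; exact hηU hy)⟩
      exact absurd (this ▸ hU) hsf
  · have : U ⊆ {η} := fun y hy ↦ (hY y).resolve_right (by rintro rfl; exact hsU hy)
    rcases subset_singleton_iff_eq.mp this with rfl | rfl
    · exact isOpen_empty
    · exact hη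

end TwoPointSpace

namespace PrimeSpectrum

variable {R : Type*} [CommRing R] [IsLocalRing R] [IsDomain R]

theorem not_isOpen_singleton_top (h : (⊥ : PrimeSpectrum R) ≠ ⊤) :
    ¬IsOpen {(⊤ : PrimeSpectrum R)} :=
  fun hopen ↦ h ((IsLocalRing.specializes_closedPoint (⊥ : PrimeSpectrum R)).mem_open hopen rfl)

theorem isOpen_singleton_bot [Ring.KrullDimLE 1 R] (h : (⊥ : PrimeSpectrum R) ≠ ⊤) :
    IsOpen {(⊥ : PrimeSpectrum R)} := by
  have : ({⊥} : Set (PrimeSpectrum R)) = {⊤}ᶜ := by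
    ext x
    rcases IsLocalRing.Ring.KrullDimLE.eq_bot_or_eq_top x with rfl | rfl <;> simp [h, h.symm]
  exact this ▸ (IsLocalRing.isClosed_singleton_closedPoint R).isOpen_compl

end PrimeSpectrum

theorem IsDiscreteValuationRing.primeSpectrum_bot_ne_top (V : Type*) [CommRing V] [IsDomain V]
    [IsDiscreteValuationRing V] : (⊥ : PrimeSpectrum V) ≠ ⊤ :=
  fun h ↦ not_a_field V (congrArg PrimeSpectrum.asIdeal h).symm

/-- Let `V` be a discrete valuation ring and `f : X ⟶ Spec V` a morphism of schemes.  Then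
`f` is submersive iff the closure of the generic fiber of `f` surjects onto `Spec V`. -/
theorem stmt10 {V : Type u} [CommRing V] [IsDomain V] [IsDiscreteValuationRing V]
    {X : Scheme.{u}} (f : X ⟶ Spec (CommRingCat.of V)) :
    IsQuotientMap f.base ↔
      f.base '' closure (f.base ⁻¹' {(⟨⊥, Ideal.bot_prime⟩ : PrimeSpectrum V)}) =
        Set.univ := by
  have hηs := IsDiscreteValuationRing.primeSpectrum_bot_ne_top V
  have hY := IsLocalRing.Ring.KrullDimLE.eq_bot_or_eq_top (R := V)
  exact (isQuotientMap_iff_of_forall_eq_or_eq f.base.hom.continuous hY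
    (PrimeSpectrum.isOpen_singleton_bot hηs) (PrimeSpectrum.not_isOpen_singleton_top hηs)).trans
    (image_closure_preimage_singleton_eq_univ_iff hY hηs).symm
end

section
/- Let f : X → Y be a universally subtrusive morphism of schemes and let {y_α} be a finite chain of points of Y under specialization. Then there exists a chain {x_α} in X with f(x_α) = y_α for all α. -/
open AlgebraicGeometry CategoryTheory Topology TopologicalSpace Set

universe u

def Subtrusive : MorphismProperty Scheme.{u} := fun X Y f =>
  (∀ y y' : Y, y' ⤳ y → ∃ x x' : X, x' ⤳ x ∧ f.base x = y ∧ f.base x' = y') ∧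
  @IsQuotientMap _ _ (constructibleTop X) (constructibleTop Y) f.base

/-
Choose an affine chart `Spec R` of `Y` containing the chain. Its primes `p₀ ⊇ ⋯ ⊇ pₙ` are the
contractions of a chain of primes of a valuation ring `V` with `R → V`, obtained by composing
valuation rings down from the fraction field of `R ⧸ pₙ`. Base change `f` along
`Spec V → Spec R → Y`: subtrusiveness lifts the specialization of the generic point of `Spec V`
to `p₀` to some `w' ⤳ w`. In an affine chart `Spec B` around `w`, the ring `B ⧸ w'` is a domain into
which `V` injects, hence a torsion-free and so flat `V`-algebra; going down lifts the chain of
`V` below `w`, and its image in `X` is the required chain.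
-/

lemma vecCons_specializes_chain {X : Type*} [TopologicalSpace X] {n : ℕ} {x₀ : X}
    {x : Fin (n + 1) → X} (hx : ∀ i j, i ≤ j → x j ⤳ x i) (h₀ : x 0 ⤳ x₀) :
    ∀ i j : Fin (n + 2), i ≤ j → Matrix.vecCons x₀ x j ⤳ Matrix.vecCons x₀ x i := by
  intro i j hij
  cases i using Fin.cases with
  | zero =>
    cases j using Fin.cases with
    | zero => exact specializes_rfl
    | succ j => simpa using (hx 0 j (Fin.zero_le j)).trans h₀
  | succ i =>
    cases j using Fin.cases with
    | zero => exact absurd hij (Fin.succ_pos i).not_ge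
    | succ j => simpa using hx i j (Fin.succ_le_succ_iff.mp hij)

lemma GeneralizingMap.exists_chain_lift {X Y : Type*} [TopologicalSpace X] [TopologicalSpace Y]
    {f : X → Y} (hf : GeneralizingMap f) :
    ∀ {n : ℕ} (y : Fin (n + 1) → Y), (∀ i j, i ≤ j → y j ⤳ y i) → ∀ x₀, f x₀ = y 0 →
      ∃ x : Fin (n + 1) → X, (∀ i j, i ≤ j → x j ⤳ x i) ∧ x 0 = x₀ ∧ ∀ i, f (x i) = y i
  | 0, y, _, x₀, hx₀ => ⟨fun _ => x₀, fun _ _ _ => specializes_rfl, rfl, fun i => by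
      rwa [Fin.fin_one_eq_zero i]⟩
  | n + 1, y, hy, x₀, hx₀ => by
    obtain ⟨x₁, hx₁, hfx₁⟩ := hf (hx₀ ▸ hy 0 1 (Fin.zero_le 1) : y 1 ⤳ f x₀)
    obtain ⟨x, hx, rfl, hfx⟩ := hf.exists_chain_lift (Fin.tail y)
      (fun i j hij => hy i.succ j.succ (Fin.succ_le_succ_iff.mpr hij)) x₁ hfx₁
    exact ⟨Matrix.vecCons x₀ x, vecCons_specializes_chain hx hx₁, rfl, Fin.cases hx₀ hfx⟩

lemma RingHom.Flat.of_injective_of_valuationRing {V S : Type*} [CommRing V] [IsDomain V]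
    [ValuationRing V] [CommRing S] [IsDomain S] {f : V →+* S} (hf : Function.Injective f) :
    f.Flat := by
  algebraize [f]
  have : FaithfulSMul V S := (faithfulSMul_iff_algebraMap_injective V S).mpr hf
  change Module.Flat V S
  rw [Module.Flat.flat_iff_torsion_eq_bot_of_isBezout, ← Submodule.isTorsionFree_iff_torsion_eq_bot]
  infer_instance

namespace PrimeSpectrum

lemma exists_chain_comap_eq_of_valuationRing {V B : Type*} [CommRing V] [IsDomain V]
    [ValuationRing V] [CommRing B] (α : V →+* B) {q q' : PrimeSpectrum B} (hq'q : q' ⤳ q)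
    (hq' : (comap α q').asIdeal = ⊥) {n : ℕ} (p : Fin (n + 1) → PrimeSpectrum V)
    (hp : ∀ i j, i ≤ j → p j ⤳ p i) (hq : comap α q = p 0) :
    ∃ s : Fin (n + 1) → PrimeSpectrum B, (∀ i j, i ≤ j → s j ⤳ s i) ∧
      ∀ i, comap α (s i) = p i := by
  let π := Ideal.Quotient.mk q'.asIdeal
  have hinj : Function.Injective (π.comp α) := by
    rw [injective_iff_map_eq_zero]
    intro v (hv : π (α v) = 0)
    rw [← Ideal.mem_bot, ← hq']
    exact Ideal.mem_comap.mpr (Ideal.Quotient.eq_zero_iff_mem.mp hv)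
  have hq_range : q ∈ range (comap π) := by
    rw [range_comap_of_surjective _ _ Ideal.Quotient.mk_surjective, Ideal.mk_ker]
    exact (le_iff_specializes q' q).mpr hq'q
  obtain ⟨q₀, rfl⟩ := hq_range
  have hgen := (RingHom.Flat.of_injective_of_valuationRing hinj).generalizingMap_comap
  obtain ⟨s, hs, -, hsp⟩ := hgen.exists_chain_lift p hp q₀ (by rw [comap_comp_apply]; exact hq)
  refine ⟨fun i => comap π (s i), fun i j hij => (hs i j hij).map (continuous_comap π),
    fun i => ?_⟩
  rw [← comap_comp_apply]
  exact hsp i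

end PrimeSpectrum

namespace ValuationSubring

open IsLocalRing

variable {R K : Type*} [CommRing R] [Field K]

def HasCenter (A : ValuationSubring K) (φ : R →+* K) (p : Ideal R) : Prop :=
  (∀ r, φ r ∈ A) ∧ ∀ r, φ r ∈ A.nonunits ↔ r ∈ p

lemma exists_hasCenter (φ : R →+* K) (q : Ideal R) [q.IsPrime] (hq : RingHom.ker φ ≤ q) :
    ∃ B : ValuationSubring K, B.HasCenter φ q := by
  have hunit : ∀ r : q.primeCompl, IsUnit (φ r) := fun r =>
    isUnit_iff_ne_zero.mpr fun h => r.2 (hq h)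
  let ψ : Localization.AtPrime q →+* K := IsLocalization.lift hunit
  have hψ : ∀ r, ψ (algebraMap R _ r) = φ r := IsLocalization.lift_eq hunit
  obtain ⟨B, hB, hloc⟩ := exists_factor_valuationRing ψ
  refine ⟨B, fun r => hψ r ▸ hB _, fun r => ?_⟩
  rw [← hψ, ← IsLocalization.AtPrime.to_map_mem_maximal_iff (Localization.AtPrime q) q,
    mem_maximalIdeal, _root_.mem_nonunits_iff, ← isUnit_map_iff (ψ.codRestrict B.toSubring hB),
    ← _root_.mem_nonunits_iff]
  exact (coe_mem_nonunits_iff (A := B) (a := ⟨_, hB _⟩)).trans (mem_maximalIdeal _)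

variable (A : ValuationSubring K) (B : ValuationSubring (ResidueField A))

lemma residue_inv {x : K} (hx : x ∈ A) (hx' : x⁻¹ ∈ A) :
    residue A ⟨x⁻¹, hx'⟩ = (residue A ⟨x, hx⟩)⁻¹ := by
  rcases eq_or_ne x 0 with rfl | hx0
  · rw [show (⟨0⁻¹, hx'⟩ : A) = ⟨0, hx⟩ from Subtype.ext inv_zero]
    change residue A 0 = (residue A 0)⁻¹
    simp
  · refine (inv_eq_of_mul_eq_one_right ?_).symm
    rw [← map_mul, ← map_one (residue A)]
    exact congrArg _ (Subtype.ext (mul_inv_cancel₀ hx0))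

lemma residue_eq_zero_of_mem_nonunits {x : K} (hx : x ∈ A.nonunits) :
    residue A ⟨x, nonunits_subset hx⟩ = 0 :=
  (residue_eq_zero_iff _).mpr (coe_mem_nonunits_iff.mp hx)

def comapResidue : ValuationSubring K where
  toSubring := (B.toSubring.comap (residue A)).map A.subtype
  mem_or_inv_mem' x := by
    have mem_of {y : K} (hy : y ∈ A) (h : residue A ⟨y, hy⟩ ∈ B) :
        y ∈ (B.toSubring.comap (residue A)).map A.subtype :=
      ⟨⟨y, hy⟩, h, rfl⟩
    by_cases hx : x ∈ A.nonunits
    · exact .inl (mem_of _ (residue_eq_zero_of_mem_nonunits A hx ▸ B.zero_mem))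
    by_cases hxi : x⁻¹ ∈ A.nonunits
    · exact .inr (mem_of _ (residue_eq_zero_of_mem_nonunits A hxi ▸ B.zero_mem))
    rw [mem_nonunits_iff_or, not_or, not_not] at hx
    rw [inv_mem_nonunits_iff, not_or, not_not] at hxi
    rcases B.mem_or_inv_mem (residue A ⟨x, hxi.2⟩) with h | h
    · exact .inl (mem_of _ h)
    · exact .inr (mem_of hx.2 (residue_inv A hxi.2 hx.2 ▸ h))

variable {A B}

lemma mem_comapResidue {x : K} : x ∈ A.comapResidue B ↔ ∃ h : x ∈ A, residue A ⟨x, h⟩ ∈ B := by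
  constructor
  · rintro ⟨⟨y, hy⟩, hB, rfl⟩
    exact ⟨hy, hB⟩
  · rintro ⟨h, hB⟩
    exact ⟨⟨x, h⟩, hB, rfl⟩

lemma comapResidue_le : A.comapResidue B ≤ A := fun _ hx => (mem_comapResidue.mp hx).1

lemma mem_comapResidue_nonunits_iff {x : K} (hx : x ∈ A) :
    x ∈ (A.comapResidue B).nonunits ↔ residue A ⟨x, hx⟩ ∈ B.nonunits := by
  by_cases hxA : x ∈ A.nonunits
  · rw [residue_eq_zero_of_mem_nonunits A hxA]
    exact iff_of_true (nonunits_le_nonunits.mpr comapResidue_le hxA) B.nonunits.zero_mem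
  have hres : residue A ⟨x, hx⟩ ≠ 0 := fun h =>
    hxA (coe_mem_nonunits_iff.mpr ((residue_eq_zero_iff _).mp h))
  rw [mem_nonunits_iff_or, not_or, not_not] at hxA
  rw [mem_nonunits_iff_or, mem_nonunits_iff_or, mem_comapResidue, or_iff_right hxA.1,
    or_iff_right hres, ← residue_inv A hx hxA.2]
  exact ⟨fun h h' => h ⟨hxA.2, h'⟩, fun h ⟨_, h'⟩ => h h'⟩

lemma HasCenter.exists_le {φ : R →+* K} {p q : Ideal R} [q.IsPrime] (hA : A.HasCenter φ p)
    (hpq : p ≤ q) : ∃ C ≤ A, C.HasCenter φ q := by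
  let ψ := (residue A).comp (φ.codRestrict A.toSubring hA.1)
  have hψ : ∀ r, ψ r = residue A ⟨φ r, hA.1 r⟩ := fun _ => rfl
  have hker : RingHom.ker ψ ≤ q := fun r hr =>
    hpq ((hA.2 r).mp (coe_mem_nonunits_iff.mpr ((residue_eq_zero_iff _).mp hr)))
  obtain ⟨B, hB⟩ := exists_hasCenter ψ q hker
  refine ⟨A.comapResidue B, comapResidue_le, fun r => mem_comapResidue.mpr ⟨hA.1 r, hB.1 r⟩,
    fun r => ?_⟩
  rw [mem_comapResidue_nonunits_iff (hA.1 r), ← hψ]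
  exact hB.2 r

lemma exists_monotone_hasCenter (φ : R →+* K) : ∀ {n : ℕ} (p : Fin (n + 1) → PrimeSpectrum R),
    (∀ i j, i ≤ j → p j ⤳ p i) → RingHom.ker φ = (p (Fin.last n)).asIdeal →
      ∃ A : Fin (n + 1) → ValuationSubring K, Monotone A ∧ ∀ i, (A i).HasCenter φ (p i).asIdeal
  | 0, p, _, hker => ⟨fun _ => ⊤, monotone_const, fun i => ⟨fun _ => trivial, fun r => by
      rw [Fin.fin_one_eq_zero i, ← Fin.last_zero, ← hker, mem_nonunits_iff_or]
      simp⟩⟩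
  | n + 1, p, hp, hker => by
    obtain ⟨A, hA, hAc⟩ := exists_monotone_hasCenter φ (Fin.tail p)
      (fun i j hij => hp i.succ j.succ (Fin.succ_le_succ_iff.mpr hij)) hker
    obtain ⟨C, hCA, hC⟩ := (hAc 0).exists_le ((PrimeSpectrum.le_iff_specializes _ _).mpr
      (hp 0 1 (Fin.zero_le 1)))
    refine ⟨Matrix.vecCons C A, Fin.monotone_iff_le_succ.mpr fun i => ?_, Fin.cases hC hAc⟩
    cases i using Fin.cases with
    | zero => exact hCA
    | succ i => exact hA (Fin.castSucc_le_succ i)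

end ValuationSubring

lemma PrimeSpectrum.exists_valuationRing_chain_comap_eq {R : Type u} [CommRing R] {n : ℕ}
    (p : Fin (n + 1) → PrimeSpectrum R) (hp : ∀ i j, i ≤ j → p j ⤳ p i) :
    ∃ (V : Type u) (_ : CommRing V) (_ : IsDomain V) (_ : ValuationRing V) (φ : R →+* V)
      (s : Fin (n + 1) → PrimeSpectrum V), (∀ i j, i ≤ j → s j ⤳ s i) ∧
        ∀ i, PrimeSpectrum.comap φ (s i) = p i := by
  let 𝔭 := (p (Fin.last n)).asIdeal
  let φ := (algebraMap (R ⧸ 𝔭) (FractionRing (R ⧸ 𝔭))).comp (Ideal.Quotient.mk 𝔭)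
  have hker : RingHom.ker φ = 𝔭 := by
    rw [RingHom.ker_comp_of_injective _ (IsFractionRing.injective _ _), Ideal.mk_ker]
  obtain ⟨A, hA, hAc⟩ := ValuationSubring.exists_monotone_hasCenter φ p hp hker
  refine ⟨A 0, inferInstance, inferInstance, inferInstance, φ.codRestrict (A 0) (hAc 0).1,
    fun i => ⟨(A 0).idealOfLE (A i) (hA (Fin.zero_le i)), inferInstance⟩,
    fun i j hij => (PrimeSpectrum.le_iff_specializes _ _).mp
      (ValuationSubring.idealOfLE_le_of_le (A 0) _ _ _ _ (hA hij)),
    fun i => PrimeSpectrum.ext (Ideal.ext fun r => ?_)⟩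
  exact ValuationSubring.coe_mem_nonunits_iff.symm.trans ((hAc i).2 r)

namespace AlgebraicGeometry

lemma Scheme.exists_openImmersion_range_generalizations (X : Scheme.{u}) (x : X) :
    ∃ (R : CommRingCat.{u}) (j : Spec R ⟶ X), IsOpenImmersion j ∧
      ∀ x', x' ⤳ x → x' ∈ range j.base := by
  obtain ⟨U, hU, hxU, -⟩ := exists_isAffineOpen_mem_and_subset (x := x) (U := ⊤) trivial
  refine ⟨_, hU.fromSpec, inferInstance, fun x' hx' => ?_⟩
  rw [hU.range_fromSpec]
  exact hx'.mem_open U.isOpen hxU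

lemma exists_chain_lift_of_lift_specializations {X : Scheme.{u}} {V : Type u} [CommRing V]
    [IsDomain V] [ValuationRing V] (f : X ⟶ Spec (CommRingCat.of V))
    (hf : ∀ y y', y' ⤳ y → ∃ x x' : X, x' ⤳ x ∧ f.base x = y ∧ f.base x' = y') {n : ℕ}
    (p : Fin n → Spec (CommRingCat.of V)) (hp : ∀ i j, i ≤ j → p j ⤳ p i) :
    ∃ x : Fin n → X, (∀ i j, i ≤ j → x j ⤳ x i) ∧ ∀ i, f.base (x i) = p i := by
  rcases n with _ | n
  · exact ⟨Fin.elim0, fun i => i.elim0, fun i => i.elim0⟩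
  let η : PrimeSpectrum V := ⟨⊥, Ideal.isPrime_bot⟩
  obtain ⟨w, w', hw'w, hw, hw'⟩ := hf (p 0) η ((PrimeSpectrum.le_iff_specializes η _).mp bot_le)
  obtain ⟨B, j, _, hj⟩ := X.exists_openImmersion_range_generalizations w
  obtain ⟨b, rfl⟩ := hj w specializes_rfl
  obtain ⟨b', rfl⟩ := hj w' hw'w
  let α := (Spec.preimage (j ≫ f)).hom
  have hα : ∀ q, (j ≫ f).base q = PrimeSpectrum.comap α q := by
    intro q
    rw [← Spec.map_preimage (j ≫ f)]
    rfl
  obtain ⟨s, hs, hsp⟩ := PrimeSpectrum.exists_chain_comap_eq_of_valuationRing α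
    (j.isOpenEmbedding.isInducing.specializes_iff.mp hw'w)
    (by rw [← hα]; exact congrArg PrimeSpectrum.asIdeal hw') p hp (by rw [← hα]; exact hw)
  refine ⟨fun i => j.base (s i), fun i k hik => (hs i k hik).map j.base.hom.continuous,
    fun i => (hα (s i)).trans (hsp i)⟩

end AlgebraicGeometry

open Limits

/-- A finite chain of points under specialization in the target of a universally
subtrusive morphism of schemes lifts to a chain in the source. -/
theorem stmt13 {X Y : Scheme.{u}} (f : X ⟶ Y) (hf : Subtrusive.universally f)
    (n : ℕ) (y : Fin n → Y) (hchain : ∀ i j : Fin n, i ≤ j → y j ⤳ y i) :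
    ∃ x : Fin n → X, (∀ i j : Fin n, i ≤ j → x j ⤳ x i) ∧
      ∀ i : Fin n, f.base (x i) = y i := by
  rcases n with _ | n
  · exact ⟨Fin.elim0, fun i => i.elim0, fun i => i.elim0⟩
  obtain ⟨R, jY, _, hjY⟩ := Y.exists_openImmersion_range_generalizations (y 0)
  choose z hz using fun i => hjY (y i) (hchain 0 i (Fin.zero_le i))
  have hz_chain : ∀ i j, i ≤ j → z j ⤳ z i := fun i j hij =>
    jY.isOpenEmbedding.isInducing.specializes_iff.mp (by rw [hz, hz]; exact hchain i j hij)
  obtain ⟨V, _, _, _, φ, s, hs, hsz⟩ :=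
    PrimeSpectrum.exists_valuationRing_chain_comap_eq z hz_chain
  let g : Spec (CommRingCat.of V) ⟶ Y := Spec.map (CommRingCat.ofHom φ) ≫ jY
  have hsub := hf _ _ _ (IsPullback.of_hasPullback f g).flip
  obtain ⟨x, hx, hfx⟩ := exists_chain_lift_of_lift_specializations (pullback.snd f g) hsub.1 s hs
  refine ⟨fun i => (pullback.fst f g).base (x i),
    fun i j hij => (hx i j hij).map (pullback.fst f g).base.hom.continuous, fun i => ?_⟩
  rw [← Scheme.Hom.comp_apply, pullback.condition, Scheme.Hom.comp_apply, hfx, ← hz, ← hsz]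
  rfl
end

section
/- Let f : X → Y be an S-subtrusive morphism of schemes and let U ⊆ Y be any subset containing all maximal (generic) points of Y. Then the restriction of f to the Zariski closure of f⁻¹(U) is surjective onto Y. -/
open AlgebraicGeometry Topology Set

universe u

/-- If `f : X ⟶ Y` is an S-subtrusive morphism of schemes and `U ⊆ Y` contains all
maximal (generic) points of `Y`, then the restriction of `f` to the Zariski closure of
`f⁻¹(U)` is surjective onto `Y`. -/
theorem stmt14 {X Y : Scheme.{u}} (f : X ⟶ Y)
    (hsub : ∀ y y' : Y, y' ⤳ y → ∃ x x' : X, x' ⤳ x ∧ f.base x = y ∧ f.base x' = y')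
    (U : Set Y) (hU : ∀ y : Y, (∀ y' : Y, y' ⤳ y → y ⤳ y') → y ∈ U) :
    f.base '' closure (f.base ⁻¹' U) = Set.univ := by
  apply Set.eq_univ_of_forall
  intro y
  -- generic point of the irreducible component of y
  have hirr : IsIrreducible (irreducibleComponent y) :=
    isIrreducible_irreducibleComponent
  set g := hirr.genericPoint with hg
  have hgen : IsGenericPoint g (irreducibleComponent y) :=
    hirr.isGenericPoint_genericPoint isClosed_irreducibleComponent
  have hgy : g ⤳ y := hgen.specializes (mem_irreducibleComponent)
  -- g is a maximal point
  have hgU : g ∈ U := by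
    apply hU
    intro y' hy'
    have h1 : closure {g} ⊆ closure {y'} :=
      closure_minimal (Set.singleton_subset_iff.mpr hy'.mem_closure) isClosed_closure
    have h2 : closure {y'} = irreducibleComponent y := by
      exact (irreducibleComponent_property y).2.2 _
        isIrreducible_singleton.closure.2 (hgen.def ▸ h1)
    have : y' ∈ irreducibleComponent y := h2 ▸ subset_closure rfl
    exact specializes_iff_mem_closure.mpr (hgen.def ▸ this)

  obtain ⟨x, x', hxx, hfx, hfx'⟩ := hsub y g hgy
  refine ⟨x, ?_, hfx⟩
  have : x' ∈ f.base ⁻¹' U := by simp [Set.mem_preimage, hfx', hgU]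
  exact closure_mono (Set.singleton_subset_iff.mpr this) hxx.mem_closure
end

section
/- Let p : S' → S be a schematically dominant and universally submersive morphism of schemes. Then p is an epimorphism in the category of schemes: for any scheme X, the map Hom(S, X) → Hom(S', X) is injective. -/
open AlgebraicGeometry CategoryTheory Topology

universe u

/-!
On points, `p` is surjective (a quotient map is), so `p ≫ f = p ≫ g` forces `f` and `g` to agree
as continuous maps. On sections over `U ⊆ X`, the two comorphisms `O_X(U) → O_S(f⁻¹U)` become
equal after composing with the injective map `O_S(f⁻¹U) → O_{S'}(p⁻¹f⁻¹U)`, hence are equal.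
-/

namespace AlgebraicGeometry.Scheme.Hom

variable {S' S X : Scheme.{u}}

lemma surjective_of_universally_isQuotientMap {p : S' ⟶ S}
    (hp : (topologically fun {_ _} _ _ f => IsQuotientMap f).universally p) :
    Function.Surjective p.base :=
  (MorphismProperty.universally_le _ p hp).surjective

lemma base_eq_of_comp_eq_of_surjective {p : S' ⟶ S} (hp : Function.Surjective p.base)
    {f g : S ⟶ X} (h : p ≫ f = p ≫ g) : f.base = g.base := by
  ext s
  obtain ⟨s', rfl⟩ := hp s
  simpa using congr(($h).base s')

lemma appLE_congr_hom {f g : S ⟶ X} (h : f = g) (U : X.Opens) (V : S.Opens)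
    (e : V ≤ f ⁻¹ᵁ U) : f.appLE U V e = g.appLE U V (h ▸ e) := by
  subst h; rfl

lemma eq_of_comp_eq_of_surjective_of_injective_app {p : S' ⟶ S}
    (hsurj : Function.Surjective p.base) (hinj : ∀ U : S.Opens, Function.Injective (p.app U))
    {f g : S ⟶ X} (h : p ≫ f = p ≫ g) : f = g := by
  refine Scheme.Hom.ext (base_eq_of_comp_eq_of_surjective hsurj h) fun U => ?_
  have : Mono (p.appLE (g ⁻¹ᵁ U) (p ⁻¹ᵁ (g ⁻¹ᵁ U)) le_rfl) := by
    rw [appLE_eq_app]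
    exact ConcreteCategory.mono_of_injective _ (hinj _)
  rw [app_eq_appLE f, appLE_map, app_eq_appLE g,
    ← cancel_mono (p.appLE (g ⁻¹ᵁ U) (p ⁻¹ᵁ (g ⁻¹ᵁ U)) le_rfl),
    appLE_comp_appLE, appLE_comp_appLE, appLE_congr_hom h]

lemma epi_of_surjective_of_injective_app (p : S' ⟶ S) (hsurj : Function.Surjective p.base)
    (hinj : ∀ U : S.Opens, Function.Injective (p.app U)) : Epi p :=
  ⟨fun _ _ => eq_of_comp_eq_of_surjective_of_injective_app hsurj hinj⟩

end AlgebraicGeometry.Scheme.Hom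

/-- A schematically dominant (i.e. `O_S → p_* O_{S'}` injective) and universally
submersive morphism of schemes is an epimorphism in the category of schemes. -/
theorem stmt19 {S' S : Scheme.{u}} (p : S' ⟶ S)
    (hdom : ∀ U : S.Opens, Function.Injective (p.app U))
    (hsub : (AlgebraicGeometry.topologically
        fun {α β} _ _ f => IsQuotientMap f).universally p) :
    ∀ (X : Scheme.{u}) (f g : S ⟶ X), p ≫ f = p ≫ g → f = g := by
  have : Epi p := Scheme.Hom.epi_of_surjective_of_injective_app p
    (Scheme.Hom.surjective_of_universally_isQuotientMap hsub) hdom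
  exact fun _ _ _ => (cancel_epi p).mp
end
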